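/- Let A be a Poisson algebra over a field F and let a, b ∈ A satisfy {a, {a, b}} = 0. Then for every n ≥ 1, ad(a)^n(b^n) = n!·{a,b}^n, where ad(a) : A → A is the map x ↦ {a,x}. -/

import Mathlib

/-! Antisymmetry turns the Leibniz rule into `{a, yz} = y{a, z} + z{a, y}`, so `ad(a)` is a
derivation, and `{a, {a, b}} = 0` says that `{a, b}` is a constant for it. Hence `ad(a)` acts on
powers of `b` as `d/dx` acts on powers of `x` with `dx/dx` constant:
`ad(a)^k (b^m) = m(m-1)⋯(m-k+1) {a,b}^k b^(m-k)`, and `k = m = n` gives the theorem. -/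

/-- A Poisson bracket on a commutative `F`-algebra `A`: an `F`-bilinear map
`{,} : A × A → A` making `(A, {,})` a Lie algebra and satisfying the Leibniz
rule `{ab, c} = a{b,c} + {a,c}b`. -/
structure PoissonBracket (F : Type*) (A : Type*) [Field F] [CommRing A] [Algebra F A] where
  br : A →ₗ[F] A →ₗ[F] A
  br_self : ∀ a : A, br a a = 0
  jacobi : ∀ a b c : A, br a (br b c) + br b (br c a) + br c (br a b) = 0
  leibniz : ∀ a b c : A, br (a * b) c = a * br b c + br a c * b

namespace PoissonBracket

variable {F A : Type*} [Field F] [CommRing A] [Algebra F A]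

/-- `{A, A}` : the `F`-linear span of all brackets `{a, b}`, `a, b ∈ A`. -/
def lieSpan (P : PoissonBracket F A) : Submodule F A :=
  Submodule.span F {x : A | ∃ a b : A, P.br a b = x}

/-- `{M, N}` : the `F`-linear span of all brackets `{u, v}`, `u ∈ M`, `v ∈ N`. -/
def brSpan (P : PoissonBracket F A) (M N : Submodule F A) : Submodule F A :=
  Submodule.span F {x : A | ∃ u ∈ M, ∃ v ∈ N, P.br u v = x}

/-- `U` is an ideal of the Lie algebra `{A, A}`. -/
def IsLieIdealOfBrackets (P : PoissonBracket F A) (U : Submodule F A) : Prop :=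
  U ≤ P.lieSpan ∧ ∀ x ∈ P.lieSpan, ∀ u ∈ U, P.br x u ∈ U

/-- The derived series `U^[0] = U`, `U^[i+1] = {U^[i], U^[i]}`. -/
def derived (P : PoissonBracket F A) (U : Submodule F A) : ℕ → Submodule F A
  | 0 => U
  | (i + 1) => P.brSpan (P.derived U i) (P.derived U i)

/-- `A` is a simple Poisson algebra: it has no Poisson ideals other than `(0)` and `A`. -/
def IsSimple (P : PoissonBracket F A) : Prop :=
  ∀ I : Ideal A, (∀ a ∈ I, ∀ b : A, P.br a b ∈ I) → I = ⊥ ∨ I = ⊤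

/-- The Poisson center `Z = {a ∈ A | {a, A} = (0)}`. -/
def pCenter (P : PoissonBracket F A) : Submodule F A where
  carrier := {a : A | ∀ b : A, P.br a b = 0}
  add_mem' := by
    intro x y hx hy b
    simp [map_add, hx b, hy b]
  zero_mem' := by
    intro b
    simp
  smul_mem' := by
    intro c x hx b
    simp [map_smul, hx b]

end PoissonBracket

variable {F A : Type*} [Field F] [CommRing A] [Algebra F A]

open PoissonBracket

namespace Derivation

variable {R B : Type*} [CommSemiring R] [CommSemiring B] [Algebra R B]

theorem pow_apply_pow_of_apply_apply_eq_zero (D : Derivation R B B) {b : B} (h : D (D b) = 0)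
    (k m : ℕ) :
    ((D : B →ₗ[R] B) ^ k) (b ^ m) = m.descFactorial k • (D b ^ k * b ^ (m - k)) := by
  induction k with
  | zero => simp
  | succ k ih =>
    have hconst : D (D b ^ k) = 0 := by rw [leibniz_pow, h, smul_zero, smul_zero]
    rw [pow_succ', Module.End.mul_apply, ih, map_nsmul, coeFn_coe, leibniz, hconst, smul_zero,
      add_zero, leibniz_pow, Nat.descFactorial_succ, mul_smul, Nat.sub_sub]
    simp only [smul_eq_mul, nsmul_eq_mul]
    ring

end Derivation

namespace PoissonBracket

theorem br_antisymm (P : PoissonBracket F A) (x y : A) : P.br x y = -P.br y x := by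
  have h := P.br_self (x + y)
  simp only [map_add, LinearMap.add_apply, P.br_self] at h
  linear_combination h

theorem br_mul_right (P : PoissonBracket F A) (x y z : A) :
    P.br x (y * z) = y * P.br x z + z * P.br x y := by
  rw [P.br_antisymm, P.leibniz, P.br_antisymm z, P.br_antisymm y]
  ring

def ad (P : PoissonBracket F A) (a : A) : Derivation F A A :=
  Derivation.mk' (P.br a) (P.br_mul_right a)

end PoissonBracket

/-- If `{a, {a, b}} = 0` then `ad(a)^n (b^n) = n! ⬝ {a,b}^n` for all `n ≥ 1`. -/
theorem ad_pow_apply_pow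
    (P : PoissonBracket F A) (a b : A) (h : P.br a (P.br a b) = 0) :
    ∀ n : ℕ, 1 ≤ n → ((P.br a) ^ n) (b ^ n) = n.factorial • (P.br a b) ^ n := by
  intro n _
  have := (P.ad a).pow_apply_pow_of_apply_apply_eq_zero h n n
  rwa [Nat.descFactorial_self, Nat.sub_self, pow_zero, mul_one] at this
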